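/- arXiv:2604.08095 — 4 statements merged into one kernel-verified Lean document; each statement's English description precedes it below -/
import Mathlib

section
/- Let b, m ≥ 1 be integers, n = b·m, and let k be an integer with 0 ≤ k ≤ n. Let X have the hypergeometric distribution Hg(n, n−k, m). Then √b · E[√X] ≤ √(n−k) ≤ √b · E[√X] + b; explicitly, √b · Σ_{s=0}^{m} (C(n−k, s)·C(k, m−s)/C(n, m)) · √s ≤ √(n−k) ≤ √b · Σ_{s=0}^{m} (C(n−k, s)·C(k, m−s)/C(n, m)) · √s + b. -/
open Finset

lemma vand0 (K k m : ℕ) : ∑ s ∈ Finset.range (m+1), K.choose s * k.choose (m - s) = (K + k).choose m := by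
  rw [Nat.add_choose_eq, Finset.Nat.sum_antidiagonal_eq_sum_range_succ_mk]

lemma vand1 (K k m : ℕ) (hm : 1 ≤ m) :
    ∑ s ∈ Finset.range (m+1), s * (K.choose s * k.choose (m - s))
      = K * ((K - 1 + k).choose (m-1)) := by
  obtain _ | K := K
  · rw [Finset.sum_eq_zero, Nat.zero_mul]
    intro s hs
    rcases Nat.eq_zero_or_pos s with h | h
    · simp [h]
    · rw [Nat.choose_eq_zero_of_lt h]; ring
  · obtain ⟨m', rfl⟩ : ∃ m', m = m' + 1 := ⟨m - 1, by omega⟩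
    rw [Finset.sum_range_succ']
    simp only [Nat.zero_mul, Nat.add_zero, Nat.add_sub_cancel]
    have h1 : ∀ t ∈ Finset.range (m' + 1),
        (t+1) * ((K+1).choose (t+1) * k.choose (m' + 1 - (t+1)))
          = (K+1) * (K.choose t * k.choose (m' - t)) := by
      intro t ht
      have := Nat.add_one_mul_choose_eq K t
      have h2 : m' + 1 - (t+1) = m' - t := by omega
      rw [h2]
      calc (t+1) * ((K+1).choose (t+1) * k.choose (m' - t))
          = ((K+1).choose (t+1) * (t+1)) * k.choose (m' - t) := by ring
        _ = (K+1) * (K.choose t * k.choose (m' - t)) := by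
            rw [← this, Nat.mul_assoc]
    rw [Finset.sum_congr rfl h1, ← Finset.mul_sum, vand0]

lemma vand2 (K k m : ℕ) (hm : 2 ≤ m) :
    ∑ s ∈ Finset.range (m+1), s * (s-1) * (K.choose s * k.choose (m - s))
      = K * (K - 1) * ((K - 2 + k).choose (m-2)) := by
  obtain _ | K := K
  · rw [Finset.sum_eq_zero]
    · ring
    intro s hs
    rcases Nat.eq_zero_or_pos s with h | h
    · simp [h]
    · rw [Nat.choose_eq_zero_of_lt h]; ring
  · obtain ⟨m', rfl⟩ : ∃ m', m = m' + 1 := ⟨m - 1, by omega⟩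
    rw [Finset.sum_range_succ']
    simp only [Nat.zero_mul, Nat.mul_zero, Nat.add_zero, Nat.zero_add]
    have h1 : ∀ t ∈ Finset.range (m' + 1),
        (t+1) * ((t+1)-1) * ((K+1).choose (t+1) * k.choose (m' + 1 - (t+1)))
          = (K+1) * (t * (K.choose t * k.choose (m' - t))) := by
      intro t ht
      have h3 := Nat.add_one_mul_choose_eq K t
      have h2 : m' + 1 - (t+1) = m' - t := by omega
      have h4 : (t+1) - 1 = t := by omega
      rw [h2, h4]
      calc (t+1) * t * ((K+1).choose (t+1) * k.choose (m' - t))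
          = ((K+1).choose (t+1) * (t+1)) * (t * k.choose (m' - t)) := by ring
        _ = (K+1) * (t * (K.choose t * k.choose (m' - t))) := by
            rw [← h3]; ring
    rw [Finset.sum_congr rfl h1, ← Finset.mul_sum, vand1 K k m' (by omega)]
    have : m' + 1 - 2 = m' - 1 := by omega
    rw [this]
    have : K + 1 - 2 = K - 1 := by omega
    rw [this, show K + 1 - 1 = K from by omega]
    ring

lemma key_pt (sb sK u : ℝ) (hsb : 0 ≤ sb) (hsK : 0 ≤ sK) (hu : 0 ≤ u) :
    sK^4 + sb^2*sK^2*u^2 - (sb^2*u^2 - sK^2)^2 ≤ 2 * sK^3 * sb * u := by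
  have h : 0 ≤ (sb*u - sK)^2 * (sb^2*u^2 + 2*u*sK*sb) := by positivity
  nlinarith [h]

set_option maxHeartbeats 1000000 in
/-- For `n = b·m` and `X ∼ Hg(n, n-k, m)`, one has `√b·E[√X] ≤ √(n-k) ≤ √b·E[√X] + b`. -/
theorem sqrt_split_equal_blocks (b m : ℕ) (hb : 1 ≤ b) (hm : 1 ≤ m) (n k : ℕ)
    (hn : n = b * m) (hk : k ≤ n) :
    Real.sqrt b * (∑ s ∈ Finset.range (m + 1),
        (((n - k).choose s * k.choose (m - s) : ℝ) / (n.choose m : ℝ)) * Real.sqrt s)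
      ≤ Real.sqrt ((n : ℝ) - k) ∧
    Real.sqrt ((n : ℝ) - k)
      ≤ Real.sqrt b * (∑ s ∈ Finset.range (m + 1),
          (((n - k).choose s * k.choose (m - s) : ℝ) / (n.choose m : ℝ)) * Real.sqrt s) + b := by
  set K := n - k with hKdef
  have hKk : K + k = n := Nat.sub_add_cancel hk
  have hmn : m ≤ n := by
    rw [hn]; calc m = 1 * m := (Nat.one_mul m).symm
      _ ≤ b * m := Nat.mul_le_mul_right m hb
  have hCpos : 0 < n.choose m := Nat.choose_pos hmn
  have hCposR : (0:ℝ) < (n.choose m : ℝ) := by exact_mod_cast hCpos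
  have hcast : ((n:ℝ) - k) = (K : ℝ) := by
    rw [hKdef, Nat.cast_sub hk]
  rcases Nat.eq_zero_or_pos K with hK0 | hKpos
  · -- K = 0 : everything is zero
    have hs0 : (∑ s ∈ Finset.range (m + 1),
        ((K.choose s * k.choose (m - s) : ℝ) / (n.choose m : ℝ)) * Real.sqrt s) = 0 := by
      apply Finset.sum_eq_zero
      intro s hs
      rcases Nat.eq_zero_or_pos s with h | h
      · simp [h]
      · rw [hK0, Nat.choose_eq_zero_of_lt h]
        simp
    rw [hcast, hs0, hK0]
    norm_num
  -- main case : K ≥ 1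
  set R := Finset.range (m + 1) with hR
  set w : ℕ → ℝ := fun s => ((K.choose s : ℝ) * (k.choose (m - s) : ℝ)) with hw
  have hw0 : ∀ s, 0 ≤ w s := fun s => by positivity
  set C : ℝ := (n.choose m : ℝ) with hC
  set D : ℝ := ((n-1).choose (m-1) : ℝ) with hD
  set T : ℝ := ∑ s ∈ R, w s * Real.sqrt s with hT
  have hD0 : (0:ℝ) ≤ D := by positivity
  have hT0 : 0 ≤ T := Finset.sum_nonneg fun s _ => by positivity
  -- the sum in the statement equals T / C
  have hsum_eq : (∑ s ∈ R, ((K.choose s * k.choose (m - s) : ℝ) / C) * Real.sqrt s) = T / C := by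
    rw [hT, Finset.sum_div]
    apply Finset.sum_congr rfl
    intro s _
    rw [div_mul_eq_mul_div]
  -- moment identities
  have hσ0 : ∑ s ∈ R, w s = C := by
    have h := vand0 K k m
    rw [hKk] at h
    calc ∑ s ∈ R, w s = ((∑ s ∈ R, K.choose s * k.choose (m - s) : ℕ) : ℝ) := by
          rw [Nat.cast_sum]
          apply Finset.sum_congr rfl
          intro s _
          push_cast
          ring
      _ = C := by rw [h]
  have hσ1 : ∑ s ∈ R, (s:ℝ) * w s = (K:ℝ) * D := by
    have h := vand1 K k m hm
    have hidx : K - 1 + k = n - 1 := by omega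
    rw [hidx] at h
    calc ∑ s ∈ R, (s:ℝ) * w s
        = ((∑ s ∈ R, s * (K.choose s * k.choose (m - s)) : ℕ) : ℝ) := by
          rw [Nat.cast_sum]
          apply Finset.sum_congr rfl
          intro s _
          push_cast
          ring
      _ = (K:ℝ) * D := by rw [h]; push_cast; ring
  set SS2 : ℝ := ∑ s ∈ R, (s:ℝ) * ((s:ℝ) - 1) * w s with hSS2def
  have hCD : C = (b:ℝ) * D := by
    have h1 : n * (n-1).choose (m-1) = n.choose m * m := by
      have := Nat.add_one_mul_choose_eq (n-1) (m-1)
      have e1 : n - 1 + 1 = n := by omega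
      have e2 : (m-1) + 1 = m := by omega
      rw [e1] at this
      rw [e2] at this
      exact this
    have h2 : (b * (n-1).choose (m-1)) * m = n.choose m * m := by
      rw [← h1, hn]; ring
    have h3 : b * (n-1).choose (m-1) = n.choose m :=
      Nat.eq_of_mul_eq_mul_right (by omega) h2
    rw [hC, hD, ← h3]
    push_cast
    ring
  -- variance bound : b * SS2 ≤ K^2 * D
  have hSS2 : (b:ℝ) * SS2 ≤ (K:ℝ)^2 * D := by
    rcases Nat.lt_or_ge m 2 with hm1 | hm2
    · -- m = 1
      have hm1' : m = 1 := by omega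
      have : SS2 = 0 := by
        rw [hSS2def]
        apply Finset.sum_eq_zero
        intro s hs
        have hs' : s < m + 1 := by simpa [hR] using hs
        have : s = 0 ∨ s = 1 := by omega
        rcases this with h | h <;> rw [h] <;> norm_num
      rw [this]
      have : (0:ℝ) ≤ (K:ℝ)^2 * D := by positivity
      linarith
    · -- m ≥ 2
      have hSS2eq : SS2 = ((K * (K - 1) * ((K - 2 + k).choose (m-2)) : ℕ) : ℝ) := by
        rw [hSS2def, ← vand2 K k m hm2, Nat.cast_sum]
        apply Finset.sum_congr rfl
        intro s _
        rcases Nat.eq_zero_or_pos s with h | h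
        · simp [h]
        · have : ((s - 1 : ℕ) : ℝ) = (s:ℝ) - 1 := by
            rw [Nat.cast_sub h]; norm_num
          push_cast [this]
          ring
      rcases Nat.lt_or_ge K 2 with hK1 | hK2
      · have hK1' : K = 1 := by omega
        rw [hSS2eq, hK1']
        norm_num
        positivity
      · -- K ≥ 2
        have hidx : K - 2 + k = n - 2 := by omega
        rw [hidx] at hSS2eq
        set E : ℝ := ((n-2).choose (m-2) : ℝ) with hE
        have hE0 : (0:ℝ) ≤ E := by positivity
        have hSS2eq' : SS2 = (K:ℝ) * ((K:ℝ) - 1) * E := by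
          rw [hSS2eq]
          push_cast [Nat.cast_sub (show 1 ≤ K by omega)]
          ring
        -- (n-1) * E = D * (m-1)
        have hI2 : ((n:ℝ) - 1) * E = D * ((m:ℝ) - 1) := by
          have := Nat.add_one_mul_choose_eq (n-2) (m-2)
          have e1 : n - 2 + 1 = n - 1 := by omega
          have e2 : (m-2) + 1 = m - 1 := by omega
          rw [e1, e2] at this
          have : (((n-1) * (n-2).choose (m-2) : ℕ) : ℝ) = (((n-1).choose (m-1) * (m-1) : ℕ) : ℝ) := by
            exact_mod_cast congrArg (Nat.cast (R := ℝ)) this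
          push_cast [Nat.cast_sub (show 1 ≤ n by omega), Nat.cast_sub (show 1 ≤ m by omega)] at this
          rw [hE, hD]
          push_cast [Nat.cast_sub (show 1 ≤ n by omega), Nat.cast_sub (show 1 ≤ m by omega)]
          linarith [this]
        -- b * (K-1) * (m-1) ≤ K * (n-1)
        have hineq : (b:ℝ) * ((K:ℝ) - 1) * ((m:ℝ) - 1) ≤ (K:ℝ) * ((n:ℝ) - 1) := by
          have hbn : (n:ℝ) = (b:ℝ) * (m:ℝ) := by exact_mod_cast congrArg (Nat.cast (R := ℝ)) hn
          have hKn : (K:ℝ) ≤ (n:ℝ) := by exact_mod_cast Nat.sub_le n k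
          have hb1 : (1:ℝ) ≤ (b:ℝ) := by exact_mod_cast hb
          have hK1 : (1:ℝ) ≤ (K:ℝ) := by exact_mod_cast hKpos
          have hnb : (b:ℝ) ≤ (n:ℝ) := by
            have : b ≤ n := by rw [hn]; exact Nat.le_mul_of_pos_right b (by omega)
            exact_mod_cast this
          nlinarith [hbn, hKn, hb1, hK1, hnb]
        rw [hSS2eq']
        have hKR : (0:ℝ) ≤ (K:ℝ) := by positivity
        have hm2R : (2:ℝ) ≤ (m:ℝ) := by exact_mod_cast hm2
        have hmpos : (0:ℝ) < (m:ℝ) - 1 := by linarith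
        have hstep : ((b:ℝ)*((K:ℝ)*((K:ℝ)-1)*E)) * ((m:ℝ)-1)
            ≤ ((K:ℝ)^2*D) * ((m:ℝ)-1) := by
          calc ((b:ℝ)*((K:ℝ)*((K:ℝ)-1)*E)) * ((m:ℝ)-1)
              = ((K:ℝ)*E) * ((b:ℝ)*((K:ℝ)-1)*((m:ℝ)-1)) := by ring
            _ ≤ ((K:ℝ)*E) * ((K:ℝ)*((n:ℝ)-1)) :=
                mul_le_mul_of_nonneg_left hineq (mul_nonneg hKR hE0)
            _ = ((K:ℝ)^2)*(((n:ℝ)-1)*E) := by ring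
            _ = ((K:ℝ)^2)*(D*((m:ℝ)-1)) := by rw [hI2]
            _ = ((K:ℝ)^2*D) * ((m:ℝ)-1) := by ring
        exact le_of_mul_le_mul_right hstep hmpos
  -- sqrt setup
  set sb : ℝ := Real.sqrt b with hsb
  set sK : ℝ := Real.sqrt K with hsK
  have hsb0 : 0 ≤ sb := Real.sqrt_nonneg _
  have hsK0 : 0 ≤ sK := Real.sqrt_nonneg _
  have hsb2 : sb^2 = (b:ℝ) := Real.sq_sqrt (by positivity)
  have hsK2 : sK^2 = (K:ℝ) := Real.sq_sqrt (by positivity)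
  have hsb1 : 1 ≤ sb := by nlinarith [hsb2, (show (1:ℝ) ≤ (b:ℝ) by exact_mod_cast hb)]
  have hsK1 : 1 ≤ sK := by nlinarith [hsK2, (show (1:ℝ) ≤ (K:ℝ) by exact_mod_cast hKpos)]
  rw [hcast, hsum_eq]
  constructor
  · -- first inequality, Cauchy-Schwarz
    have CS := Finset.sum_mul_sq_le_sq_mul_sq R (fun s => Real.sqrt (w s))
      (fun s => Real.sqrt (w s) * Real.sqrt s)
    have e1 : ∑ s ∈ R, Real.sqrt (w s) * (Real.sqrt (w s) * Real.sqrt s) = T := by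
      rw [hT]
      apply Finset.sum_congr rfl
      intro s _
      rw [← mul_assoc, Real.mul_self_sqrt (hw0 s)]
    have e2 : ∑ s ∈ R, (Real.sqrt (w s))^2 = C := by
      rw [← hσ0]
      apply Finset.sum_congr rfl
      intro s _
      rw [Real.sq_sqrt (hw0 s)]
    have e3 : ∑ s ∈ R, (Real.sqrt (w s) * Real.sqrt s)^2 = (K:ℝ) * D := by
      rw [← hσ1]
      apply Finset.sum_congr rfl
      intro s _
      rw [mul_pow, Real.sq_sqrt (hw0 s), Real.sq_sqrt (Nat.cast_nonneg s)]
      ring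
    rw [e1, e2, e3] at CS
    -- CS : T^2 ≤ C * (K * D)
    rw [← mul_div_assoc, div_le_iff₀ hCposR]
    -- goal : sb * T ≤ sK * C
    have h5 : (sb*T)^2 ≤ (sK*C)^2 := by
      have h6 : (b:ℝ) * T^2 ≤ (b:ℝ) * (C*((K:ℝ)*D)) :=
        mul_le_mul_of_nonneg_left CS (by positivity)
      calc (sb*T)^2 = (b:ℝ)*T^2 := by rw [mul_pow, hsb2]
        _ ≤ (b:ℝ)*(C*((K:ℝ)*D)) := h6
        _ = (K:ℝ)*(((b:ℝ)*D)*C) := by ring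
        _ = (sK*C)^2 := by rw [← hCD, mul_pow, hsK2]; ring
    nlinarith [h5, mul_nonneg hsb0 hT0, mul_nonneg hsK0 hCposR.le]
  · -- second inequality
    have pointw : ∀ s ∈ R,
        w s * (sK^4 + sb^2*sK^2*(s:ℝ) - (sb^2*(s:ℝ) - sK^2)^2)
          ≤ w s * (2 * sK^3 * sb * Real.sqrt s) := by
      intro s _
      apply mul_le_mul_of_nonneg_left _ (hw0 s)
      have h := key_pt sb sK (Real.sqrt s) hsb0 hsK0 (Real.sqrt_nonneg _)
      rw [Real.sq_sqrt (Nat.cast_nonneg s)] at h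
      exact h
    have hsumle := Finset.sum_le_sum pointw
    have eR : ∑ s ∈ R, w s * (2 * sK^3 * sb * Real.sqrt s) = 2 * sK^3 * sb * T := by
      rw [hT, Finset.mul_sum]
      apply Finset.sum_congr rfl
      intro s _
      ring
    have eL : ∑ s ∈ R, w s * (sK^4 + sb^2*sK^2*(s:ℝ) - (sb^2*(s:ℝ) - sK^2)^2)
        = 3*sb^2*sK^2*((K:ℝ)*D) - sb^4*SS2 - sb^4*((K:ℝ)*D) := by
      have hcongr : ∀ s ∈ R,
          w s * (sK^4 + sb^2*sK^2*(s:ℝ) - (sb^2*(s:ℝ) - sK^2)^2)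
            = 3*sb^2*sK^2*((s:ℝ)*w s) - sb^4*((s:ℝ)*((s:ℝ)-1)*w s) - sb^4*((s:ℝ)*w s) := by
        intro s _
        ring
      rw [Finset.sum_congr rfl hcongr, Finset.sum_sub_distrib, Finset.sum_sub_distrib,
        ← Finset.mul_sum, ← Finset.mul_sum, ← Finset.mul_sum, hσ1, ← hSS2def]
    rw [eR, eL] at hsumle
    -- replace casts by sb, sK
    have hKr : (K:ℝ) = sK^2 := hsK2.symm
    have hbr : (b:ℝ) = sb^2 := hsb2.symm
    rw [hKr] at hsumle
    rw [hKr, hbr] at hSS2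
    rw [← hsK, hbr]
    -- hsumle : 3*sb^2*sK^2*(sK^2*D) - sb^4*SS2 - sb^4*(sK^2*D) ≤ 2*sK^3*sb*T
    have hSS2b : sb^4*SS2 ≤ sb^2 * ((sK^2)^2 * D) :=  by
      have := mul_le_mul_of_nonneg_left hSS2 (sq_nonneg sb)
      nlinarith [this]
    have hTlow : 2*sb^2*sK^4*D - sb^4*sK^2*D ≤ 2*sK^3*sb*T := by nlinarith [hsumle, hSS2b]
    have haux : 0 ≤ sb^4*sK^2*D*(2*sK - 1) := by
      have h1 : (0:ℝ) ≤ 2*sK - 1 := by linarith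
      positivity
    have hCDb : C = sb^2 * D := by rw [hCD, hbr]
    rw [← mul_div_assoc, ← sub_le_iff_le_add, le_div_iff₀ hCposR, hCDb]
    -- goal : (sK - sb^2) * (sb^2*D) ≤ sb*T
    have h3 : (0:ℝ) < 2*sK^3 := by positivity
    have h2 : ((sK - sb^2) * (sb^2*D)) * (2*sK^3) ≤ (sb*T) * (2*sK^3) := by
      nlinarith [hTlow, haux]
    exact le_of_mul_le_mul_right h2 h3
end

section
/- Let X be a random variable on a probability space with E[X²] < ∞, and let a, c be real constants such that a·X + c ≥ 0 almost surely and a·E[X] + c > 0. Then √(a·E[X] + c) − (a²/2)·(a·E[X] + c)^{−3/2}·Var(X) ≤ E[√(a·X + c)] ≤ √(a·E[X] + c), where Var(X) = E[X²] − (E[X])². -/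
open MeasureTheory

lemma sqrt_taylor_core (u v : ℝ) (hu : 0 ≤ u) (hv : 0 < v) :
    v + (u * u - v * v) / (2 * v) - (u * u - v * v) ^ 2 / (2 * (v * v) * v) ≤ u ∧
    u ≤ v + (u * u - v * v) / (2 * v) := by
  have key : 0 ≤ (u - v) ^ 2 * u * (u + 2 * v) := by positivity
  have hp : (u * u - v * v) / (2 * v) * (2 * v) = u * u - v * v :=
    div_mul_cancel₀ _ (by positivity)
  have hq : (u * u - v * v) ^ 2 / (2 * (v * v) * v) * (2 * (v * v) * v)
      = (u * u - v * v) ^ 2 := div_mul_cancel₀ _ (by positivity)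
  constructor
  · nlinarith [hp, hq, key, mul_pos hv hv, mul_pos (mul_pos hv hv) hv, hv, hu,
      sq_nonneg (u - v)]
  · nlinarith [hp, mul_pos hv hv, sq_nonneg (u - v), hv]

lemma sqrt_taylor_aux (y s : ℝ) (hy : 0 ≤ y) (hs : 0 < s) :
    Real.sqrt s + (y - s) / (2 * Real.sqrt s) - (y - s) ^ 2 / (2 * s * Real.sqrt s)
      ≤ Real.sqrt y ∧
    Real.sqrt y ≤ Real.sqrt s + (y - s) / (2 * Real.sqrt s) := by
  have hvs : Real.sqrt s * Real.sqrt s = s := Real.mul_self_sqrt hs.le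
  have huy : Real.sqrt y * Real.sqrt y = y := Real.mul_self_sqrt hy
  have h := sqrt_taylor_core (Real.sqrt y) (Real.sqrt s) (Real.sqrt_nonneg y)
    (Real.sqrt_pos.mpr hs)
  rw [huy, hvs] at h
  exact h

/-- Two-sided Jensen-type bound for `E[√(aX+c)]` in terms of `E[X]` and `Var(X)`. -/
theorem sqrt_jensen_two_sided_affine {Ω : Type*} [MeasurableSpace Ω] (μ : Measure Ω)
    [IsProbabilityMeasure μ] (X : Ω → ℝ) (a c : ℝ)
    (hX1 : Integrable X μ) (hX2 : Integrable (fun ω => X ω ^ 2) μ)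
    (hpos : ∀ᵐ ω ∂μ, 0 ≤ a * X ω + c)
    (hmean : 0 < a * (∫ ω, X ω ∂μ) + c) :
    Real.sqrt (a * (∫ ω, X ω ∂μ) + c) -
        (a ^ 2 / 2) * (a * (∫ ω, X ω ∂μ) + c) ^ (-(3 : ℝ) / 2) *
          ((∫ ω, X ω ^ 2 ∂μ) - (∫ ω, X ω ∂μ) ^ 2)
      ≤ ∫ ω, Real.sqrt (a * X ω + c) ∂μ ∧
    (∫ ω, Real.sqrt (a * X ω + c) ∂μ) ≤ Real.sqrt (a * (∫ ω, X ω ∂μ) + c) := by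
  set m := ∫ ω, X ω ∂μ with hm
  set s := a * m + c with hs_def
  have hs : 0 < s := hmean
  have hv : 0 < Real.sqrt s := Real.sqrt_pos.mpr hs
  have hLin : Integrable (fun ω => a * X ω + c) μ :=
    (hX1.const_mul a).add (integrable_const c)
  have hLin' : Integrable (fun ω => a * X ω + c - s) μ := hLin.sub (integrable_const s)
  have hSq : Integrable (fun ω => (a * X ω + c - s) ^ 2) μ := by
    have heq : (fun ω => (a * X ω + c - s) ^ 2)
        = fun ω => a ^ 2 * X ω ^ 2 + (2 * a * (c - s)) * X ω + (c - s) ^ 2 := by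
      funext ω; ring
    rw [heq]
    exact ((hX2.const_mul _).add (hX1.const_mul _)).add (integrable_const _)
  have hSqrt : Integrable (fun ω => Real.sqrt (a * X ω + c)) μ := by
    refine Integrable.mono' (((hLin.add (integrable_const 1)).div_const 2)) ?_ ?_
    · exact (Real.continuous_sqrt.comp_aestronglyMeasurable hLin.aestronglyMeasurable)
    · filter_upwards [hpos] with ω hω
      rw [Real.norm_eq_abs, abs_of_nonneg (Real.sqrt_nonneg _)]
      simp only [Pi.add_apply]
      have h := Real.sq_sqrt hω
      nlinarith [Real.sqrt_nonneg (a * X ω + c), sq_nonneg (Real.sqrt (a * X ω + c) - 1)]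
  have hIlin : ∫ ω, (a * X ω + c - s) ∂μ = 0 := by
    have h1 : (fun ω => a * X ω + c - s) = fun ω => a * X ω + (c - s) := by funext ω; ring
    rw [h1, integral_add (hX1.const_mul a) (integrable_const _), integral_const_mul,
      integral_const, probReal_univ]
    simp [hs_def, ← hm]
  have hIsq : ∫ ω, (a * X ω + c - s) ^ 2 ∂μ = a ^ 2 * ((∫ ω, X ω ^ 2 ∂μ) - m ^ 2) := by
    have heq : (fun ω => (a * X ω + c - s) ^ 2)
        = fun ω => a ^ 2 * X ω ^ 2 + (2 * a * (c - s)) * X ω + (c - s) ^ 2 := by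
      funext ω; ring
    have hI12 : Integrable (fun ω => a ^ 2 * X ω ^ 2 + (2 * a * (c - s)) * X ω) μ :=
      (hX2.const_mul _).add (hX1.const_mul _)
    rw [heq, integral_add hI12 (integrable_const _),
      integral_add (hX2.const_mul _) (hX1.const_mul _), integral_const_mul, integral_const_mul,
      integral_const, probReal_univ]
    have h2 : c - s = -(a * m) := by rw [hs_def]; ring
    rw [h2]
    simp only [smul_eq_mul, one_mul, ENNReal.toReal_one, ← hm]
    ring
  have hupper : (∫ ω, Real.sqrt (a * X ω + c) ∂μ) ≤ Real.sqrt s := by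
    have hmono : (∫ ω, Real.sqrt (a * X ω + c) ∂μ)
        ≤ ∫ ω, (Real.sqrt s + (a * X ω + c - s) / (2 * Real.sqrt s)) ∂μ := by
      refine integral_mono_ae hSqrt ((integrable_const _).add (hLin'.div_const _)) ?_
      filter_upwards [hpos] with ω hω
      exact (sqrt_taylor_aux _ s hω hs).2
    calc (∫ ω, Real.sqrt (a * X ω + c) ∂μ) ≤ _ := hmono
      _ = Real.sqrt s := by
          rw [integral_add (integrable_const _) (hLin'.div_const _), integral_const,
            probReal_univ, integral_div, hIlin]
          simp
  have hlower : Real.sqrt s - a ^ 2 * ((∫ ω, X ω ^ 2 ∂μ) - m ^ 2) / (2 * s * Real.sqrt s)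
      ≤ ∫ ω, Real.sqrt (a * X ω + c) ∂μ := by
    have hmono : (∫ ω, (Real.sqrt s + (a * X ω + c - s) / (2 * Real.sqrt s)
          - (a * X ω + c - s) ^ 2 / (2 * s * Real.sqrt s)) ∂μ)
        ≤ ∫ ω, Real.sqrt (a * X ω + c) ∂μ := by
      have hIg : Integrable (fun ω => Real.sqrt s + (a * X ω + c - s) / (2 * Real.sqrt s)) μ :=
        (integrable_const _).add (hLin'.div_const _)
      refine integral_mono_ae (hIg.sub (hSq.div_const _)) hSqrt ?_
      filter_upwards [hpos] with ω hω
      exact (sqrt_taylor_aux _ s hω hs).1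
    calc Real.sqrt s - a ^ 2 * ((∫ ω, X ω ^ 2 ∂μ) - m ^ 2) / (2 * s * Real.sqrt s)
        = ∫ ω, (Real.sqrt s + (a * X ω + c - s) / (2 * Real.sqrt s)
          - (a * X ω + c - s) ^ 2 / (2 * s * Real.sqrt s)) ∂μ := by
          have hIg : Integrable (fun ω => Real.sqrt s + (a * X ω + c - s) / (2 * Real.sqrt s)) μ :=
            (integrable_const _).add (hLin'.div_const _)
          rw [integral_sub hIg (hSq.div_const _),
            integral_add (integrable_const _) (hLin'.div_const _), integral_const, probReal_univ,
            integral_div, integral_div, hIlin, hIsq]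
          simp
      _ ≤ _ := hmono
  have hrpow : s ^ (-(3:ℝ) / 2) = (2 * s * Real.sqrt s)⁻¹ * 2 := by
    have h32 : s ^ ((3:ℝ) / 2) = s * Real.sqrt s := by
      rw [show (3:ℝ)/2 = 1 + 1/2 by norm_num, Real.rpow_add hs, Real.rpow_one,
        ← Real.sqrt_eq_rpow]
    rw [show (-(3:ℝ)/2) = -((3:ℝ)/2) by ring, Real.rpow_neg hs.le, h32]
    rw [mul_comm (2:ℝ) s, mul_assoc]
    rw [mul_inv]
    field_simp
  constructor
  · refine le_trans (le_of_eq ?_) hlower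
    rw [hrpow]
    ring
  · exact hupper
end

section
/- Let n ≥ 1 and 0 ≤ k ≤ n be integers, let m_1, …, m_b ≥ 1 be integers with m_1 + ⋯ + m_b = n, and for each ℓ let X_ℓ have the hypergeometric distribution Hg(n, n−k, m_ℓ). Set A = √(n−k) and B = (1/√b)·Σ_{ℓ=1}^{b} E[√(X_ℓ)]. Then B ≤ A; moreover, if k < n, then A − B ≤ √(n−k)·(1 − (1/√(b·n))·Σ_{ℓ=1}^{b} √(m_ℓ)) + (k/(2·(n−1)·√(b·n·(n−k))))·Σ_{ℓ=1}^{b} (n − m_ℓ)/√(m_ℓ). -/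
open Finset


lemma vdm (K k M : ℕ) :
    ∑ s ∈ Finset.range (M+1), K.choose s * k.choose (M - s) = (K + k).choose M := by
  rw [Nat.add_choose_eq, Finset.Nat.sum_antidiagonal_eq_sum_range_succ_mk]

lemma mom1 (K k M : ℕ) (hM : 1 ≤ M) :
    ∑ s ∈ Finset.range (M+1), s * (K.choose s * k.choose (M - s))
      = K * (K + k - 1).choose (M - 1) := by
  obtain _ | M' := M
  · omega
  rw [Finset.sum_range_succ']
  simp only [Nat.succ_eq_add_one, zero_mul, add_zero, Nat.add_sub_cancel]
  obtain _ | K' := K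
  · simp [Nat.choose_zero_succ]
  have key : ∀ j, (j+1) * ((K'+1).choose (j+1) * k.choose (M' + 1 - (j+1)))
      = (K'+1) * (K'.choose j * k.choose (M' - j)) := by
    intro j
    have h := Nat.add_one_mul_choose_eq K' j
    have h3 : M' + 1 - (j+1) = M' - j := by omega
    rw [h3]
    calc (j+1) * ((K'+1).choose (j+1) * k.choose (M'-j))
        = ((K'+1).choose (j+1) * (j+1)) * k.choose (M'-j) := by ring
      _ = ((K'+1) * K'.choose j) * k.choose (M'-j) := by rw [← h]
      _ = _ := by ring
  calc ∑ j ∈ Finset.range (M'+1), (j+1) * ((K'+1).choose (j+1) * k.choose (M'+1 - (j+1)))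
      = ∑ j ∈ Finset.range (M'+1), (K'+1) * (K'.choose j * k.choose (M' - j)) :=
        Finset.sum_congr rfl fun j _ => key j
    _ = (K'+1) * ∑ j ∈ Finset.range (M'+1), K'.choose j * k.choose (M' - j) := by
        rw [Finset.mul_sum]
    _ = (K'+1) * (K' + k).choose M' := by rw [vdm]
    _ = _ := by congr 2; omega

lemma mom2 (K k M : ℕ) (hM : 2 ≤ M) :
    ∑ s ∈ Finset.range (M+1), s * (s-1) * (K.choose s * k.choose (M - s))
      = K * (K-1) * (K + k - 2).choose (M - 2) := by
  obtain _ | M' := M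
  · omega
  rw [Finset.sum_range_succ']
  simp only [Nat.succ_eq_add_one, zero_mul, add_zero, Nat.add_sub_cancel]
  obtain _ | K' := K
  · simp [Nat.choose_zero_succ]
  have key : ∀ j, (j+1) * (j+1-1) * ((K'+1).choose (j+1) * k.choose (M' + 1 - (j+1)))
      = (K'+1) * (j * (K'.choose j * k.choose (M' - j))) := by
    intro j
    have h := Nat.add_one_mul_choose_eq K' j
    have h3 : M' + 1 - (j+1) = M' - j := by omega
    have h4 : j + 1 - 1 = j := by omega
    rw [h3, h4]
    calc (j+1) * j * ((K'+1).choose (j+1) * k.choose (M'-j))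
        = j * (((K'+1).choose (j+1) * (j+1)) * k.choose (M'-j)) := by ring
      _ = j * (((K'+1) * K'.choose j) * k.choose (M'-j)) := by rw [← h]
      _ = _ := by ring
  calc ∑ j ∈ Finset.range (M'+1), (j+1) * (j+1-1) * ((K'+1).choose (j+1) * k.choose (M'+1 - (j+1)))
      = ∑ j ∈ Finset.range (M'+1), (K'+1) * (j * (K'.choose j * k.choose (M' - j))) :=
        Finset.sum_congr rfl fun j _ => key j
    _ = (K'+1) * ∑ j ∈ Finset.range (M'+1), j * (K'.choose j * k.choose (M' - j)) := by
        rw [Finset.mul_sum]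
    _ = (K'+1) * (K' * (K' + k - 1).choose (M' - 1)) := by rw [mom1 K' k M' (by omega)]
    _ = _ := by
        have : K' + 1 - 1 = K' := by omega
        rw [this]
        have h5 : K' + 1 + k - 2 = K' + k - 1 := by omega
        have h6 : M' + 1 - 2 = M' - 1 := by omega
        rw [h5, h6]; ring

lemma hg_sum (n K k M : ℕ) (hn : K + k = n) (hM1 : 1 ≤ M) (hMn : M ≤ n) :
    ∑ s ∈ Finset.range (M+1), ((K.choose s : ℝ) * (k.choose (M - s) : ℝ)) / (n.choose M : ℝ) = 1 := by
  have hc : (0:ℝ) < (n.choose M : ℝ) := by exact_mod_cast Nat.choose_pos hMn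
  rw [← Finset.sum_div, div_eq_one_iff_eq (ne_of_gt hc)]
  have h := vdm K k M
  rw [hn] at h
  exact_mod_cast h

lemma hg_mean (n K k M : ℕ) (hn : K + k = n) (hM1 : 1 ≤ M) (hMn : M ≤ n) :
    ∑ s ∈ Finset.range (M+1), (s:ℝ) * (((K.choose s : ℝ) * (k.choose (M - s) : ℝ)) / (n.choose M : ℝ))
      = (K:ℝ) * M / n := by
  have hn1 : 1 ≤ n := le_trans hM1 hMn
  have hc : (0:ℝ) < (n.choose M : ℝ) := by exact_mod_cast Nat.choose_pos hMn
  have hn0 : (0:ℝ) < (n:ℝ) := by exact_mod_cast hn1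
  have h := mom1 K k M hM1
  rw [show K + k - 1 = n - 1 by omega] at h
  have e1 : n * (n-1).choose (M-1) = n.choose M * M := by
    have h2 := Nat.add_one_mul_choose_eq (n-1) (M-1)
    rwa [show n-1+1 = n by omega, show M-1+1 = M by omega] at h2
  have e1c : (n:ℝ) * ((n-1).choose (M-1) : ℝ) = (n.choose M : ℝ) * M := by exact_mod_cast e1
  have hcast : ∑ s ∈ Finset.range (M+1), (s:ℝ) * (((K.choose s : ℝ) * (k.choose (M - s) : ℝ)) / (n.choose M : ℝ))
      = ((∑ s ∈ Finset.range (M+1), s * (K.choose s * k.choose (M - s)) : ℕ) : ℝ) / (n.choose M : ℝ) := by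
    push_cast
    rw [Finset.sum_div]
    exact Finset.sum_congr rfl fun s _ => by ring
  rw [hcast, h]
  rw [div_eq_div_iff (ne_of_gt hc) (ne_of_gt hn0)]
  push_cast
  linear_combination (K:ℝ) * e1c

lemma hg_sq (n K k M : ℕ) (hn : K + k = n) (hM1 : 1 ≤ M) (hMn : M ≤ n) :
    ∑ s ∈ Finset.range (M+1), (s:ℝ)^2 * (((K.choose s : ℝ) * (k.choose (M - s) : ℝ)) / (n.choose M : ℝ))
      = (K:ℝ) * M / n + (K:ℝ) * ((K:ℝ)-1) * M * ((M:ℝ)-1) / ((n:ℝ) * ((n:ℝ)-1)) := by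
  have hn1 : 1 ≤ n := le_trans hM1 hMn
  have hc : (0:ℝ) < (n.choose M : ℝ) := by exact_mod_cast Nat.choose_pos hMn
  have hsplit : ∑ s ∈ Finset.range (M+1), (s:ℝ)^2 * (((K.choose s : ℝ) * (k.choose (M - s) : ℝ)) / (n.choose M : ℝ))
      = (∑ s ∈ Finset.range (M+1), (s:ℝ)*((s:ℝ)-1) * (((K.choose s : ℝ) * (k.choose (M - s) : ℝ)) / (n.choose M : ℝ)))
        + ∑ s ∈ Finset.range (M+1), (s:ℝ) * (((K.choose s : ℝ) * (k.choose (M - s) : ℝ)) / (n.choose M : ℝ)) := by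
    rw [← Finset.sum_add_distrib]
    exact Finset.sum_congr rfl fun s _ => by ring
  rw [hsplit, hg_mean n K k M hn hM1 hMn]
  have hT : (∑ s ∈ Finset.range (M+1), (s:ℝ)*((s:ℝ)-1) * (((K.choose s : ℝ) * (k.choose (M - s) : ℝ)) / (n.choose M : ℝ)))
      = (K:ℝ) * ((K:ℝ)-1) * M * ((M:ℝ)-1) / ((n:ℝ) * ((n:ℝ)-1)) := by
    rcases eq_or_lt_of_le hM1 with h1 | hM2
    · -- M = 1
      rw [← h1]
      norm_num [Finset.sum_range_succ]
    · -- M ≥ 2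
      have hM2 : 2 ≤ M := hM2
      have hn2 : 2 ≤ n := le_trans hM2 hMn
      have h := mom2 K k M hM2
      rw [show K + k - 2 = n - 2 by omega] at h
      have e1 : n * (n-1).choose (M-1) = n.choose M * M := by
        have h2 := Nat.add_one_mul_choose_eq (n-1) (M-1)
        rwa [show n-1+1 = n by omega, show M-1+1 = M by omega] at h2
      have e2 : (n-1) * (n-2).choose (M-2) = (n-1).choose (M-1) * (M-1) := by
        have h2 := Nat.add_one_mul_choose_eq (n-2) (M-2)
        rwa [show n-2+1 = n-1 by omega, show M-2+1 = M-1 by omega] at h2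
      have e1c : (n:ℝ) * ((n-1).choose (M-1) : ℝ) = (n.choose M : ℝ) * M := by exact_mod_cast e1
      have e2c : ((n:ℝ)-1) * ((n-2).choose (M-2) : ℝ) = ((n-1).choose (M-1) : ℝ) * ((M:ℝ)-1) := by
        have := e2
        have c1 : ((n-1:ℕ):ℝ) = (n:ℝ)-1 := by push_cast [Nat.cast_sub (by omega : 1 ≤ n)]; ring
        have c2 : ((M-1:ℕ):ℝ) = (M:ℝ)-1 := by push_cast [Nat.cast_sub (by omega : 1 ≤ M)]; ring
        calc ((n:ℝ)-1) * ((n-2).choose (M-2) : ℝ) = ((n-1:ℕ):ℝ) * ((n-2).choose (M-2) : ℝ) := by rw [c1]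
          _ = ((n-1).choose (M-1) : ℝ) * ((M-1:ℕ):ℝ) := by exact_mod_cast this
          _ = _ := by rw [c2]
      have hcast : (∑ s ∈ Finset.range (M+1), (s:ℝ)*((s:ℝ)-1) * (((K.choose s : ℝ) * (k.choose (M - s) : ℝ)) / (n.choose M : ℝ)))
          = ((∑ s ∈ Finset.range (M+1), s * (s-1) * (K.choose s * k.choose (M - s)) : ℕ) : ℝ) / (n.choose M : ℝ) := by
        push_cast
        rw [Finset.sum_div]
        refine Finset.sum_congr rfl fun s _ => ?_
        rcases s with _ | j
        · simp
        · push_cast [Nat.succ_sub_one]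
          ring
      rw [hcast, h]
      have hKpos : (K:ℝ)*((K:ℝ)-1) * ((K*(K-1):ℕ):ℝ)⁻¹ = 1 ∨ True := Or.inr trivial
      rcases Nat.eq_zero_or_pos K with hK0 | hK1
      · subst hK0; norm_num
      · have cK : ((K-1:ℕ):ℝ) = (K:ℝ)-1 := by push_cast [Nat.cast_sub hK1]; ring
        have hnn : (0:ℝ) < (n:ℝ)*((n:ℝ)-1) := by
          have : (2:ℝ) ≤ (n:ℝ) := by exact_mod_cast hn2
          nlinarith
        rw [div_eq_div_iff (ne_of_gt hc) (ne_of_gt hnn)]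
        push_cast [cK]
        linear_combination ((K:ℝ)*((K:ℝ)-1)*(n:ℝ)) * e2c + ((K:ℝ)*((K:ℝ)-1)*((M:ℝ)-1)) * e1c
  rw [hT]; ring

lemma pt_sqrt (x c : ℝ) (hx : 0 ≤ x) (hc : 0 < c) :
    3/(2*c)*x - x^2/(2*c^3) ≤ Real.sqrt x := by
  have ha : 0 ≤ Real.sqrt x := Real.sqrt_nonneg x
  have hax : (Real.sqrt x)^2 = x := Real.sq_sqrt hx
  set a := Real.sqrt x with hadef
  have key : 0 ≤ a*(a-c)^2*(a+2*c) :=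
    mul_nonneg (mul_nonneg ha (sq_nonneg _)) (by linarith)
  have h3 : (0:ℝ) < 2*c^3 := by positivity
  rw [← hax, show 3/(2*c)*(a^2) - (a^2)^2/(2*c^3) = (3*a^2*c^2 - a^4)/(2*c^3) by
    field_simp, div_le_iff₀ h3]
  nlinarith [key]

lemma block_up (n K k M : ℕ) (hn : K + k = n) (hM1 : 1 ≤ M) (hMn : M ≤ n) :
    ∑ s ∈ Finset.range (M+1), ((K.choose s : ℝ) * (k.choose (M - s) : ℝ) / (n.choose M : ℝ)) * Real.sqrt s
      ≤ Real.sqrt ((K:ℝ) * M / n) := by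
  set w : ℕ → ℝ := fun s => (K.choose s : ℝ) * (k.choose (M - s) : ℝ) / (n.choose M : ℝ) with hw
  have hwpos : ∀ s, 0 ≤ w s := fun s => by positivity
  have key := Finset.sum_mul_sq_le_sq_mul_sq (Finset.range (M+1))
    (fun s => Real.sqrt (w s)) (fun s => Real.sqrt (w s) * Real.sqrt s)
  have e1 : ∀ s ∈ Finset.range (M+1), Real.sqrt (w s) * (Real.sqrt (w s) * Real.sqrt s)
      = w s * Real.sqrt s := fun s _ => by
    rw [← mul_assoc, Real.mul_self_sqrt (hwpos s)]
  have e2 : ∀ s ∈ Finset.range (M+1), (Real.sqrt (w s))^2 = w s := fun s _ =>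
    Real.sq_sqrt (hwpos s)
  have e3 : ∀ s ∈ Finset.range (M+1), (Real.sqrt (w s) * Real.sqrt s)^2 = (s:ℝ) * w s :=
    fun s _ => by
      rw [mul_pow, Real.sq_sqrt (hwpos s), Real.sq_sqrt (Nat.cast_nonneg s)]; ring
  rw [Finset.sum_congr rfl e1, Finset.sum_congr rfl e2, Finset.sum_congr rfl e3] at key
  rw [hg_sum n K k M hn hM1 hMn, hg_mean n K k M hn hM1 hMn, one_mul] at key
  have hE : 0 ≤ ∑ s ∈ Finset.range (M+1), w s * Real.sqrt s :=
    Finset.sum_nonneg fun s _ => mul_nonneg (hwpos s) (Real.sqrt_nonneg _)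
  have hKM : (0:ℝ) ≤ (K:ℝ) * M / n := by positivity
  exact (Real.le_sqrt hE hKM).mpr key

lemma block_low (n K k M : ℕ) (hn : K + k = n) (hM1 : 1 ≤ M) (hMn : M ≤ n)
    (hK : 1 ≤ K) (hk : 1 ≤ k) :
    Real.sqrt K * Real.sqrt M / Real.sqrt n
      - ((k:ℝ)/(2*((n:ℝ)-1)*(Real.sqrt n * Real.sqrt K))) * (((n:ℝ)-M)/Real.sqrt M)
      ≤ ∑ s ∈ Finset.range (M+1), ((K.choose s : ℝ) * (k.choose (M - s) : ℝ) / (n.choose M : ℝ)) * Real.sqrt s := by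
  set w : ℕ → ℝ := fun s => (K.choose s : ℝ) * (k.choose (M - s) : ℝ) / (n.choose M : ℝ) with hw
  have hwpos : ∀ s, 0 ≤ w s := fun s => by positivity
  have hn2 : 2 ≤ n := by omega
  have hμ : (0:ℝ) < (K:ℝ) * M / n := by
    have h1 : (0:ℝ) < (K:ℝ) := by exact_mod_cast hK
    have h2 : (0:ℝ) < (M:ℝ) := by exact_mod_cast hM1
    have h3 : (0:ℝ) < (n:ℝ) := by exact_mod_cast (by omega : 0 < n)
    positivity
  set c := Real.sqrt ((K:ℝ) * M / n) with hcdef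
  have hc : 0 < c := Real.sqrt_pos.mpr hμ
  have step1 : ∑ s ∈ Finset.range (M+1), w s * (3/(2*c)*(s:ℝ) - (s:ℝ)^2/(2*c^3))
      ≤ ∑ s ∈ Finset.range (M+1), w s * Real.sqrt s :=
    Finset.sum_le_sum fun s _ =>
      mul_le_mul_of_nonneg_left (pt_sqrt (s:ℝ) c (Nat.cast_nonneg s) hc) (hwpos s)
  have step2 : ∑ s ∈ Finset.range (M+1), w s * (3/(2*c)*(s:ℝ) - (s:ℝ)^2/(2*c^3))
      = 3/(2*c)*((K:ℝ)*M/n)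
        - (1/(2*c^3))*((K:ℝ)*M/n + (K:ℝ)*((K:ℝ)-1)*M*((M:ℝ)-1)/((n:ℝ)*((n:ℝ)-1))) := by
    have expand : ∀ s ∈ Finset.range (M+1), w s * (3/(2*c)*(s:ℝ) - (s:ℝ)^2/(2*c^3))
        = 3/(2*c)*((s:ℝ)*w s) - (1/(2*c^3))*((s:ℝ)^2*w s) := fun s _ => by ring
    rw [Finset.sum_congr rfl expand, Finset.sum_sub_distrib, ← Finset.mul_sum, ← Finset.mul_sum,
      hg_mean n K k M hn hM1 hMn, hg_sq n K k M hn hM1 hMn]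
  -- algebraic identity
  have hsn : (0:ℝ) < Real.sqrt n := Real.sqrt_pos.mpr (by exact_mod_cast (by omega : 0 < n))
  have hsK : (0:ℝ) < Real.sqrt K := Real.sqrt_pos.mpr (by exact_mod_cast hK)
  have hsM : (0:ℝ) < Real.sqrt M := Real.sqrt_pos.mpr (by exact_mod_cast hM1)
  have en : ((n:ℝ)) = (Real.sqrt n)^2 := (Real.sq_sqrt (Nat.cast_nonneg n)).symm
  have eK : ((K:ℝ)) = (Real.sqrt K)^2 := (Real.sq_sqrt (Nat.cast_nonneg K)).symm
  have eM : ((M:ℝ)) = (Real.sqrt M)^2 := (Real.sq_sqrt (Nat.cast_nonneg M)).symm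
  have ek : ((k:ℝ)) = (Real.sqrt n)^2 - (Real.sqrt K)^2 := by
    rw [← en, ← eK]
    have : (K:ℝ) + k = n := by exact_mod_cast hn
    linarith
  have hcval : c = Real.sqrt K * Real.sqrt M / Real.sqrt n := by
    rw [hcdef, Real.sqrt_div (by positivity) , Real.sqrt_mul (Nat.cast_nonneg K)]
  have hne1 : (Real.sqrt n)^2 - 1 ≠ 0 := by
    have : (2:ℝ) ≤ (n:ℝ) := by exact_mod_cast hn2
    rw [← en]; intro hcon; nlinarith
  have heq : Real.sqrt K * Real.sqrt M / Real.sqrt n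
      - ((k:ℝ)/(2*((n:ℝ)-1)*(Real.sqrt n * Real.sqrt K))) * (((n:ℝ)-M)/Real.sqrt M)
      = 3/(2*c)*((K:ℝ)*M/n)
        - (1/(2*c^3))*((K:ℝ)*M/n + (K:ℝ)*((K:ℝ)-1)*M*((M:ℝ)-1)/((n:ℝ)*((n:ℝ)-1))) := by
    rw [hcval]
    set sn := Real.sqrt (n:ℝ) with hsndef
    set sK := Real.sqrt (K:ℝ) with hsKdef
    set sM := Real.sqrt (M:ℝ) with hsMdef
    rw [ek, en, eK, eM]
    field_simp [hsn.ne', hsK.ne', hsM.ne', hne1]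
    ring
  rw [heq]
  calc _ = ∑ s ∈ Finset.range (M+1), w s * (3/(2*c)*(s:ℝ) - (s:ℝ)^2/(2*c^3)) := step2.symm
    _ ≤ _ := step1

lemma block_exact (n M : ℕ) (hM1 : 1 ≤ M) (hMn : M ≤ n) :
    ∑ s ∈ Finset.range (M+1), ((n.choose s : ℝ) * ((Nat.choose 0 (M - s)) : ℝ) / (n.choose M : ℝ)) * Real.sqrt s
      = Real.sqrt M := by
  rw [Finset.sum_eq_single_of_mem M (Finset.self_mem_range_succ M)]
  · rw [Nat.sub_self]
    have hc : (0:ℝ) < (n.choose M : ℝ) := by exact_mod_cast Nat.choose_pos hMn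
    simp [div_self hc.ne']
  · intro s hs hne
    have hlt : s < M := by
      have := Finset.mem_range.mp hs; omega
    rw [Nat.choose_eq_zero_of_lt (by omega : 0 < M - s)]
    simp

/-- Comparison of `A = √(n-k)` with `B = (1/√b)·Σ_ℓ E[√X_ℓ]`, `X_ℓ ∼ Hg(n, n-k, m_ℓ)`,
for arbitrary block sizes `m_1 + ⋯ + m_b = n`. -/
theorem sqrt_split_arbitrary_blocks (n k b : ℕ) (hn : 1 ≤ n) (hk : k ≤ n)
    (m : Fin b → ℕ) (hm : ∀ ℓ, 1 ≤ m ℓ) (hsum : ∑ ℓ, m ℓ = n) :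
    (1 / Real.sqrt b) * (∑ ℓ, ∑ s ∈ Finset.range (m ℓ + 1),
        (((n - k).choose s * k.choose (m ℓ - s) : ℝ) / (n.choose (m ℓ) : ℝ)) * Real.sqrt s)
      ≤ Real.sqrt ((n : ℝ) - k) ∧
    (k < n →
      Real.sqrt ((n : ℝ) - k) -
          (1 / Real.sqrt b) * (∑ ℓ, ∑ s ∈ Finset.range (m ℓ + 1),
            (((n - k).choose s * k.choose (m ℓ - s) : ℝ) / (n.choose (m ℓ) : ℝ)) * Real.sqrt s)
        ≤ Real.sqrt ((n : ℝ) - k) *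
            (1 - (1 / Real.sqrt ((b : ℝ) * n)) * ∑ ℓ, Real.sqrt (m ℓ)) +
          ((k : ℝ) / (2 * ((n : ℝ) - 1) * Real.sqrt ((b : ℝ) * n * ((n : ℝ) - k)))) *
            ∑ ℓ, ((n : ℝ) - m ℓ) / Real.sqrt (m ℓ)) := by
  have hb : 0 < b := by
    rcases Nat.eq_zero_or_pos b with h0 | h; · subst h0; simp at hsum; omega
    exact h
  set K := n - k with hKdef
  have hKk : K + k = n := by omega
  have hcastK : ((K:ℕ):ℝ) = (n:ℝ) - k := by
    rw [hKdef]; push_cast [Nat.cast_sub hk]; ring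
  have hMn : ∀ ℓ, m ℓ ≤ n := fun ℓ => by
    have h := Finset.single_le_sum (f := m) (fun i _ => Nat.zero_le _) (Finset.mem_univ ℓ)
    rwa [hsum] at h
  set E : Fin b → ℝ := fun ℓ => ∑ s ∈ Finset.range (m ℓ + 1),
      ((K.choose s : ℝ) * (k.choose (m ℓ - s) : ℝ) / (n.choose (m ℓ) : ℝ)) * Real.sqrt s with hEdef
  set S1 : ℝ := ∑ ℓ, Real.sqrt (m ℓ) with hS1def
  have hsb : (0:ℝ) < Real.sqrt b := Real.sqrt_pos.mpr (by exact_mod_cast hb)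
  have hsn : (0:ℝ) < Real.sqrt n := Real.sqrt_pos.mpr (by exact_mod_cast hn)
  have hsnn : (0:ℝ) ≤ Real.sqrt ((K:ℕ):ℝ) := Real.sqrt_nonneg _
  -- Cauchy–Schwarz for S1
  have hS1nonneg : 0 ≤ S1 := Finset.sum_nonneg fun ℓ _ => Real.sqrt_nonneg _
  have hS1le : S1 ≤ Real.sqrt b * Real.sqrt n := by
    have key := Finset.sum_mul_sq_le_sq_mul_sq Finset.univ (fun _ : Fin b => (1:ℝ))
      (fun ℓ => Real.sqrt (m ℓ))
    simp only [one_mul, one_pow] at key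
    have e1 : ∑ _ℓ : Fin b, (1:ℝ) = (b:ℝ) := by simp
    have e2 : ∑ ℓ : Fin b, (Real.sqrt (m ℓ))^2 = (n:ℝ) := by
      have : ∀ ℓ : Fin b, (Real.sqrt (m ℓ))^2 = ((m ℓ : ℕ):ℝ) := fun ℓ =>
        Real.sq_sqrt (Nat.cast_nonneg _)
      rw [Finset.sum_congr rfl fun ℓ _ => this ℓ]
      rw [← Nat.cast_sum]
      exact_mod_cast hsum
    rw [e1, e2] at key
    have : S1 ≤ Real.sqrt ((b:ℝ) * n) := by
      rw [Real.le_sqrt hS1nonneg (by positivity)]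
      exact key
    rwa [Real.sqrt_mul (Nat.cast_nonneg b)] at this
  -- upper bounds on E
  have hEup : ∀ ℓ, E ℓ ≤ Real.sqrt ((K:ℕ):ℝ) * Real.sqrt (m ℓ) / Real.sqrt n := by
    intro ℓ
    have h := block_up n K k (m ℓ) hKk (hm ℓ) (hMn ℓ)
    have heq : Real.sqrt ((K:ℝ) * (m ℓ) / n) = Real.sqrt ((K:ℕ):ℝ) * Real.sqrt (m ℓ) / Real.sqrt n := by
      rw [Real.sqrt_div (by positivity), Real.sqrt_mul (Nat.cast_nonneg K)]
    rw [heq] at h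
    exact h
  have hEnonneg : ∀ ℓ, 0 ≤ E ℓ := fun ℓ =>
    Finset.sum_nonneg fun s _ => mul_nonneg (by positivity) (Real.sqrt_nonneg _)
  -- the expression in the theorem equals (1/√b) * ∑ E
  have hexpr : (∑ ℓ, ∑ s ∈ Finset.range (m ℓ + 1),
      (((n - k).choose s * k.choose (m ℓ - s) : ℝ) / (n.choose (m ℓ) : ℝ)) * Real.sqrt s)
      = ∑ ℓ, E ℓ := rfl
  have hsumE_up : ∑ ℓ, E ℓ ≤ Real.sqrt ((K:ℕ):ℝ) * Real.sqrt b := by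
    calc ∑ ℓ, E ℓ ≤ ∑ ℓ, Real.sqrt ((K:ℕ):ℝ) * Real.sqrt (m ℓ) / Real.sqrt n :=
          Finset.sum_le_sum fun ℓ _ => hEup ℓ
      _ = (Real.sqrt ((K:ℕ):ℝ) / Real.sqrt n) * S1 := by
          rw [hS1def, Finset.mul_sum]
          exact Finset.sum_congr rfl fun ℓ _ => by ring
      _ ≤ (Real.sqrt ((K:ℕ):ℝ) / Real.sqrt n) * (Real.sqrt b * Real.sqrt n) := by
          apply mul_le_mul_of_nonneg_left hS1le (by positivity)
      _ = Real.sqrt ((K:ℕ):ℝ) * Real.sqrt b := by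
          field_simp
  constructor
  · -- Part 1
    rw [hexpr, ← hcastK]
    rw [show (1 / Real.sqrt b) * (∑ ℓ, E ℓ) = (∑ ℓ, E ℓ) / Real.sqrt b by ring,
      div_le_iff₀ hsb]
    exact hsumE_up
  · -- Part 2
    intro hkn
    rw [hexpr, ← hcastK]
    have eqbn : Real.sqrt ((b:ℝ) * n) = Real.sqrt b * Real.sqrt n :=
      Real.sqrt_mul (Nat.cast_nonneg b) _
    have eqbnK : Real.sqrt ((b:ℝ) * n * ((K:ℕ):ℝ)) = Real.sqrt b * Real.sqrt n * Real.sqrt ((K:ℕ):ℝ) := by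
      rw [Real.sqrt_mul (by positivity), Real.sqrt_mul (Nat.cast_nonneg b)]
    rw [eqbn, eqbnK]
    rcases Nat.eq_zero_or_pos k with hk0 | hk1
    · -- k = 0 : exact equality
      subst hk0
      have hKn : K = n := by omega
      have hEeq : ∀ ℓ, E ℓ = Real.sqrt (m ℓ) := by
        intro ℓ
        rw [hEdef]
        simp only [hKn]
        exact block_exact n (m ℓ) (hm ℓ) (hMn ℓ)
      have hsE : ∑ ℓ, E ℓ = S1 := Finset.sum_congr rfl fun ℓ _ => hEeq ℓ
      rw [hsE, hKn]
      have h2 : ((0:ℕ):ℝ) = 0 := by norm_num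
      rw [h2]
      have : Real.sqrt (n:ℝ) * (1 - 1 / (Real.sqrt b * Real.sqrt n) * S1)
          = Real.sqrt (n:ℝ) - (1/Real.sqrt b) * S1 := by
        field_simp
      rw [this]
      simp
    · -- 1 ≤ k
      have hK1 : 1 ≤ K := by omega
      have hn2 : 2 ≤ n := by omega
      have hsK : (0:ℝ) < Real.sqrt ((K:ℕ):ℝ) := Real.sqrt_pos.mpr (by exact_mod_cast hK1)
      have hn1ne : ((n:ℝ) - 1) ≠ 0 := by
        have : (2:ℝ) ≤ (n:ℝ) := by exact_mod_cast hn2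
        intro hcon; nlinarith
      set S2 : ℝ := ∑ ℓ, ((n:ℝ) - m ℓ) / Real.sqrt (m ℓ) with hS2def
      set C0 : ℝ := (k:ℝ)/(2*((n:ℝ)-1)*(Real.sqrt n * Real.sqrt ((K:ℕ):ℝ))) with hC0def
      have hlow : (Real.sqrt ((K:ℕ):ℝ) / Real.sqrt n) * S1 - C0 * S2 ≤ ∑ ℓ, E ℓ := by
        have step : ∀ ℓ ∈ Finset.univ (α := Fin b),
            Real.sqrt ((K:ℕ):ℝ) * Real.sqrt (m ℓ) / Real.sqrt n
              - C0 * (((n:ℝ) - m ℓ)/Real.sqrt (m ℓ)) ≤ E ℓ := fun ℓ _ =>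
          block_low n K k (m ℓ) hKk (hm ℓ) (hMn ℓ) hK1 hk1
        calc (Real.sqrt ((K:ℕ):ℝ) / Real.sqrt n) * S1 - C0 * S2
            = ∑ ℓ, (Real.sqrt ((K:ℕ):ℝ) * Real.sqrt (m ℓ) / Real.sqrt n
                - C0 * (((n:ℝ) - m ℓ)/Real.sqrt (m ℓ))) := by
              rw [Finset.sum_sub_distrib, hS1def, hS2def, Finset.mul_sum, Finset.mul_sum]
              congr 1
              exact Finset.sum_congr rfl fun ℓ _ => by ring
          _ ≤ ∑ ℓ, E ℓ := Finset.sum_le_sum step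
      have hmul := mul_le_mul_of_nonneg_left hlow (le_of_lt (by positivity : (0:ℝ) < 1/Real.sqrt b))
      have heq2 : Real.sqrt ((K:ℕ):ℝ)
          - (1/Real.sqrt b) * ((Real.sqrt ((K:ℕ):ℝ) / Real.sqrt n) * S1 - C0 * S2)
          = Real.sqrt ((K:ℕ):ℝ) * (1 - 1 / (Real.sqrt b * Real.sqrt n) * S1)
            + (k:ℝ) / (2 * ((n:ℝ) - 1) * (Real.sqrt b * Real.sqrt n * Real.sqrt ((K:ℕ):ℝ))) * S2 := by
        rw [hC0def]
        field_simp
        ring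
      linarith
end

section
/- Let n ≥ 1 and let f : {-1,1}^n → {-1,1} be a function with Inf[f] := E_x[s_f(x)] > 0, and set T = Inf[f]² / (4·BSA[f]²). Then E_x[s_f(x)·1{s_f(x) ≥ T}] ≥ (1/2)·Inf[f]; equivalently, if a uniformly random boundary edge is chosen from the edges {x, x^{⊕i}} with f(x) ≠ f(x^{⊕i}) and then one of its two endpoints is chosen uniformly, the chosen vertex v satisfies s_f(v) ≥ T with probability at least 1/2. -/
open Finset
open scoped Classical

/-- The embedding of `Bool` into `{-1, 1} ⊆ ℝ`. -/
noncomputable def chi (b : Bool) : ℝ := if b then 1 else -1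

/-- Flip the `i`-th coordinate of a point of the Boolean cube. -/
def flipAt {n : ℕ} (x : Fin n → Bool) (i : Fin n) : Fin n → Bool :=
  Function.update x i (!x i)

/-- The sensitivity of `f` at `x`: the number of coordinates whose flip changes `f`. -/
noncomputable def sens {n : ℕ} (f : (Fin n → Bool) → ℝ) (x : Fin n → Bool) : ℕ :=
  (Finset.univ.filter (fun i => f (flipAt x i) ≠ f x)).card

/-- The Boolean surface area `BSA[f] = E_x √(s_f(x))`, `x` uniform on the cube. -/
noncomputable def BSA {n : ℕ} (f : (Fin n → Bool) → ℝ) : ℝ :=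
  (∑ x : Fin n → Bool, Real.sqrt (sens f x)) / 2 ^ n

/-- Evaluation of a polynomial at a point of the cube `{-1,1}^n`. -/
noncomputable def pev {n : ℕ} (p : MvPolynomial (Fin n) ℝ) (x : Fin n → Bool) : ℝ :=
  MvPolynomial.eval (fun i => chi (x i)) p

/-- `f` is a degree-`d` polynomial threshold function: `f = sgn p` for some multilinear
polynomial `p` of total degree at most `d` that is nonvanishing on the cube. -/
def IsPTF (d : ℕ) {n : ℕ} (f : (Fin n → Bool) → ℝ) : Prop :=
  ∃ p : MvPolynomial (Fin n) ℝ,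
    (∀ m ∈ p.support, ∀ i, m i ≤ 1) ∧ p.totalDegree ≤ d ∧
    ∀ x, pev p x ≠ 0 ∧ f x = Real.sign (pev p x)

/-- The total influence `Inf[f] = E_x s_f(x)`. -/
noncomputable def Inff {n : ℕ} (f : (Fin n → Bool) → ℝ) : ℝ :=
  (∑ x : Fin n → Bool, (sens f x : ℝ)) / 2 ^ n

/-- At least half of the boundary-edge mass is attached to vertices of sensitivity at
least `Inf[f]²/(4·BSA[f]²)`. -/
theorem boundary_mass_on_sensitive_vertices (n : ℕ) (hn : 1 ≤ n)
    (f : (Fin n → Bool) → ℝ) (hf : ∀ x, f x = 1 ∨ f x = -1) (hInf : 0 < Inff f) :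
    (1 / 2) * Inff f ≤
      (∑ x : Fin n → Bool,
        if Inff f ^ 2 / (4 * BSA f ^ 2) ≤ (sens f x : ℝ) then (sens f x : ℝ) else 0) /
        2 ^ n := by
  classical
  set S : ℝ := ∑ x : Fin n → Bool, (sens f x : ℝ) with hS
  set B : ℝ := ∑ x : Fin n → Bool, Real.sqrt (sens f x) with hB
  have h2n : (0:ℝ) < 2 ^ n := by positivity
  have hSpos : 0 < S := by
    have : Inff f = S / 2 ^ n := rfl
    rw [this, div_pos_iff] at hInf
    rcases hInf with ⟨h, _⟩ | ⟨_, h⟩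
    · exact h
    · linarith
  have hex : ∃ x : Fin n → Bool, (0:ℝ) < (sens f x : ℝ) := by
    by_contra h
    push_neg at h
    have : S ≤ 0 := Finset.sum_nonpos (fun x _ => h x)
    linarith
  have hBpos : 0 < B := by
    obtain ⟨x, hx⟩ := hex
    refine Finset.sum_pos' (fun y _ => Real.sqrt_nonneg _) ⟨x, Finset.mem_univ x, ?_⟩
    exact Real.sqrt_pos.mpr hx
  set T : ℝ := S ^ 2 / (4 * B ^ 2) with hTdef
  have hT : Inff f ^ 2 / (4 * BSA f ^ 2) = T := by
    have h1 : Inff f = S / 2 ^ n := rfl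
    have h2 : BSA f = B / 2 ^ n := rfl
    rw [h1, h2, hTdef]
    field_simp
  have hsqrtT : Real.sqrt T = S / (2 * B) := by
    have : T = (S / (2 * B)) ^ 2 := by
      rw [hTdef]; field_simp; ring
    rw [this, Real.sqrt_sq (by positivity)]
  have hpt : ∀ x : Fin n → Bool,
      (sens f x : ℝ) - (if T ≤ (sens f x : ℝ) then (sens f x : ℝ) else 0)
        ≤ Real.sqrt T * Real.sqrt (sens f x) := by
    intro x
    by_cases h : T ≤ (sens f x : ℝ)
    · rw [if_pos h]
      simp only [sub_self]
      exact mul_nonneg (Real.sqrt_nonneg _) (Real.sqrt_nonneg _)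
    · rw [if_neg h]
      push_neg at h
      have hs : (sens f x : ℝ) = Real.sqrt (sens f x) * Real.sqrt (sens f x) :=
        (Real.mul_self_sqrt (by positivity)).symm
      calc (sens f x : ℝ) - 0 = Real.sqrt (sens f x) * Real.sqrt (sens f x) := by
            rw [← hs]; ring
        _ ≤ Real.sqrt T * Real.sqrt (sens f x) := by
            apply mul_le_mul_of_nonneg_right _ (Real.sqrt_nonneg _)
            exact Real.sqrt_le_sqrt h.le
  set H : ℝ := ∑ x : Fin n → Bool,
      if T ≤ (sens f x : ℝ) then (sens f x : ℝ) else 0 with hH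
  have hsum : S - H ≤ Real.sqrt T * B := by
    rw [hS, hH, ← Finset.sum_sub_distrib, hB, Finset.mul_sum]
    exact Finset.sum_le_sum (fun x _ => hpt x)
  rw [hsqrtT] at hsum
  have hhalf : S / 2 ≤ H := by
    have : S / (2 * B) * B = S / 2 := by field_simp
    linarith [hsum, this]
  have hgoal : (∑ x : Fin n → Bool,
      if Inff f ^ 2 / (4 * BSA f ^ 2) ≤ (sens f x : ℝ) then (sens f x : ℝ) else 0) = H := by
    rw [hH]
    exact Finset.sum_congr rfl (fun x _ => by rw [hT])
  rw [hgoal]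
  have h1 : Inff f = S / 2 ^ n := rfl
  rw [h1]
  calc (1 / 2) * (S / 2 ^ n) = (S / 2) / 2 ^ n := by ring
    _ ≤ H / 2 ^ n := by gcongr
end
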